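/- The boundary values of Ψ_N^{1,+} are given by Ψ_N^{1,+}(1) = ₁F₁(-N,-2N-1,iΩ) and Ψ_N^{1,+}(-1) = ₁F₁(-N-1,-2N-1,-iΩ) - (-iΩ)^{N+1}·N!/(2N+1)!. -/

import Mathlib

open Complex Finset

/-- The Jacobi polynomial `P_n^{(a,b)}(s)` with nonnegative integer parameters:
`P_n^{(a,b)}(s) = ∑_{j=0}^{n} C(n+a, n-j) C(n+b, j) ((s-1)/2)^j ((s+1)/2)^(n-j)`. -/
noncomputable def jacobiP (a b n : ℕ) (s : ℂ) : ℂ :=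
  ∑ j ∈ Finset.range (n + 1),
    (Nat.choose (n + a) (n - j) : ℂ) * (Nat.choose (n + b) j : ℂ) *
      ((s - 1) / 2) ^ j * ((s + 1) / 2) ^ (n - j)

/-- `Ψ_N^{1,+}(s) = ∑_{m=0}^N (iΩ)^m [(2N+1-m)!/(2N+1)!] P_m^{(N-m, N-m+1)}(s)`. -/
noncomputable def Psi (N : ℕ) (Ω : ℂ) (s : ℂ) : ℂ :=
  ∑ m ∈ Finset.range (N + 1),
    (I * Ω) ^ m * ((Nat.factorial (2 * N + 1 - m) : ℂ) / (Nat.factorial (2 * N + 1) : ℂ)) *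
      jacobiP (N - m) (N - m + 1) m s

/-- Terminating confluent hypergeometric sum `∑_{m=0}^{n} ((a)_m/(b)_m) z^m/m!`. -/
noncomputable def hypF (a b : ℂ) (n : ℕ) (z : ℂ) : ℂ :=
  ∑ m ∈ Finset.range (n + 1),
    ((ascPochhammer ℂ m).eval a / (ascPochhammer ℂ m).eval b) * z ^ m / (Nat.factorial m)

lemma poch_neg (n m : ℕ) :
    (ascPochhammer ℂ m).eval (-(n:ℂ)) = (-1)^m * (n.descFactorial m : ℂ) := by
  induction m with
  | zero => simp
  | succ m ih =>
    rw [ascPochhammer_succ_eval, ih, Nat.descFactorial_succ]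
    rcases le_or_gt m n with h | h
    · push_cast [h]
      ring
    · rw [Nat.descFactorial_eq_zero_iff_lt.2 h]
      push_cast
      ring

lemma ratio_eq (a b m : ℕ) (hm : m ≤ a) (hb : m ≤ b) :
    (ascPochhammer ℂ m).eval (-(a:ℂ)) / (ascPochhammer ℂ m).eval (-(b:ℂ)) / (m.factorial : ℂ)
      = ((b - m).factorial : ℂ) / (b.factorial : ℂ) * (a.choose m) := by
  rw [poch_neg, poch_neg]
  have key : ((b - m).factorial : ℂ) * (b.descFactorial m : ℂ) = (b.factorial : ℂ) := by
    exact_mod_cast congrArg (Nat.cast : ℕ → ℂ) (Nat.factorial_mul_descFactorial hb)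
  have hd : (a.descFactorial m : ℂ) = (m.factorial : ℂ) * (a.choose m : ℂ) := by
    exact_mod_cast congrArg (Nat.cast : ℕ → ℂ) (Nat.descFactorial_eq_factorial_mul_choose a m)
  have h1 : (b.descFactorial m : ℂ) ≠ 0 := by
    exact_mod_cast fun h =>
      absurd (Nat.descFactorial_eq_zero_iff_lt.1 (by exact_mod_cast h)) (by omega)
  have h2 : (m.factorial : ℂ) ≠ 0 := by exact_mod_cast m.factorial_ne_zero
  have h3 : (b.factorial : ℂ) ≠ 0 := by exact_mod_cast b.factorial_ne_zero
  have h4 : ((-1:ℂ))^m ≠ 0 := pow_ne_zero _ (by norm_num)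
  field_simp
  linear_combination (b.factorial : ℂ) * hd -
    (a.choose m : ℂ) * (m.factorial : ℂ) * key

lemma jacobiP_one (a b n : ℕ) : jacobiP a b n 1 = ((n+a).choose n : ℂ) := by
  unfold jacobiP
  rw [Finset.sum_eq_single 0]
  · simp
  · intro j hj hj0
    norm_num [zero_pow hj0]
  · intro h; exact absurd (Finset.mem_range.2 (Nat.succ_pos n)) h

lemma jacobiP_neg_one (a b n : ℕ) : jacobiP a b n (-1) = (-1)^n * ((n+b).choose n : ℂ) := by
  unfold jacobiP
  rw [Finset.sum_eq_single n]
  · norm_num [show ((-1:ℂ)-1)/2 = -1 by ring, mul_comm]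
  · intro j hj hjn
    have h : n - j ≠ 0 := by
      have := Finset.mem_range.1 hj; omega
    norm_num [zero_pow h]
  · intro h; exact absurd (Finset.self_mem_range_succ n) h

/-- boundary values of `Ψ_N^{1,+}`:
`Ψ_N^{1,+}(1) = ₁F₁(-N,-2N-1,iΩ)` and
`Ψ_N^{1,+}(-1) = ₁F₁(-N-1,-2N-1,-iΩ) - (-iΩ)^{N+1}·N!/(2N+1)!`. -/
theorem Psi_boundary_values (N : ℕ) (Ω : ℂ) :
    Psi N Ω 1 = hypF (-(N : ℂ)) (-(2 * (N : ℂ) + 1)) N (I * Ω) ∧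
    Psi N Ω (-1)
      = hypF (-(N : ℂ) - 1) (-(2 * (N : ℂ) + 1)) (N + 1) (-(I * Ω))
          - (-(I * Ω)) ^ (N + 1) *
              ((Nat.factorial N : ℂ) / (Nat.factorial (2 * N + 1) : ℂ)) := by
  have hb2 : -(2 * (N:ℂ) + 1) = -(((2*N+1 : ℕ)):ℂ) := by push_cast; ring
  have ha : -(N:ℂ) - 1 = -(((N+1 : ℕ)):ℂ) := by push_cast; ring
  constructor
  · rw [Psi, hypF]
    refine Finset.sum_congr rfl fun m hm => ?_
    have hmN : m ≤ N := Nat.lt_succ_iff.1 (Finset.mem_range.1 hm)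
    rw [jacobiP_one, hb2, show m + (N - m) = N by omega]
    rw [show ((ascPochhammer ℂ m).eval (-(N:ℂ)) / (ascPochhammer ℂ m).eval (-(((2*N+1:ℕ)):ℂ)))
          * (I * Ω) ^ m / (m.factorial : ℂ)
        = (ascPochhammer ℂ m).eval (-(N:ℂ)) / (ascPochhammer ℂ m).eval (-(((2*N+1:ℕ)):ℂ))
          / (m.factorial : ℂ) * (I * Ω) ^ m by ring,
      ratio_eq N (2*N+1) m hmN (by omega)]
    ring
  · rw [Psi, hypF, Finset.sum_range_succ (n := N+1)]
    have hlast : ((ascPochhammer ℂ (N+1)).eval (-(N:ℂ) - 1) /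
          (ascPochhammer ℂ (N+1)).eval (-(2 * (N:ℂ) + 1))) * (-(I * Ω)) ^ (N+1) /
          ((N+1).factorial : ℂ)
        = (-(I * Ω)) ^ (N + 1) * ((N.factorial : ℂ) / ((2*N+1).factorial : ℂ)) := by
      rw [ha, hb2]
      rw [show ((ascPochhammer ℂ (N+1)).eval (-(((N+1:ℕ)):ℂ)) /
            (ascPochhammer ℂ (N+1)).eval (-(((2*N+1:ℕ)):ℂ))) * (-(I * Ω)) ^ (N+1) /
            ((N+1).factorial : ℂ)
          = (ascPochhammer ℂ (N+1)).eval (-(((N+1:ℕ)):ℂ)) /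
            (ascPochhammer ℂ (N+1)).eval (-(((2*N+1:ℕ)):ℂ)) / ((N+1).factorial : ℂ)
            * (-(I * Ω)) ^ (N+1) by ring,
        ratio_eq (N+1) (2*N+1) (N+1) le_rfl (by omega)]
      rw [show 2*N+1-(N+1) = N by omega, Nat.choose_self]
      ring
    rw [hlast, add_sub_cancel_right]
    refine Finset.sum_congr rfl fun m hm => ?_
    have hmN : m ≤ N := Nat.lt_succ_iff.1 (Finset.mem_range.1 hm)
    rw [jacobiP_neg_one, ha, hb2, show m + (N - m + 1) = N+1 by omega]
    rw [show ((ascPochhammer ℂ m).eval (-(((N+1:ℕ)):ℂ)) /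
          (ascPochhammer ℂ m).eval (-(((2*N+1:ℕ)):ℂ))) * (-(I * Ω)) ^ m / (m.factorial : ℂ)
        = (ascPochhammer ℂ m).eval (-(((N+1:ℕ)):ℂ)) /
          (ascPochhammer ℂ m).eval (-(((2*N+1:ℕ)):ℂ)) / (m.factorial : ℂ)
          * (-(I * Ω)) ^ m by ring,
      ratio_eq (N+1) (2*N+1) m (by omega) (by omega), neg_pow (I * Ω) m]
    ring
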